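/- arXiv:2205.04388 — 2 statements merged into one kernel-verified Lean document; each statement's English description precedes it below -/
import Mathlib

section
/- For any high-dimensional periodic sequences S, Q, T ⊆ ℝ × ℝ^d, the oriented elastic metric satisfies the triangle inequality: Elm^o(S,T) ≤ Elm^o(S,Q) + Elm^o(Q,T). -/
/-- A high-dimensional periodic sequence in `ℝ × ℝ^d`: a period `l > 0` and a motif
`p : Fin m → ℝ × ℝ^d` with strictly increasing time coordinates in `[0, l)`, giving the set
`{p i + j·l·e₁ : i ∈ Fin m, j ∈ ℤ}`. -/
structure HSeq (d m : ℕ) where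
  m_pos : 0 < m
  l : ℝ
  l_pos : 0 < l
  p : Fin m → ℝ × EuclideanSpace ℝ (Fin d)
  t_strict : StrictMono fun i => (p i).1
  t0_nonneg : 0 ≤ (p ⟨0, m_pos⟩).1
  t_lt : ∀ i, (p i).1 < l

namespace HSeq

variable {d m : ℕ}

/-- The point set `{p i + j·l·e₁ : i ∈ Fin m, j ∈ ℤ}` of the sequence. -/
def pts (S : HSeq d m) : Set (ℝ × EuclideanSpace ℝ (Fin d)) :=
  {x | ∃ (i : Fin m) (j : ℤ), x = ((S.p i).1 + S.l * j, (S.p i).2)}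

/-- The time projection `t(S) ⊆ ℝ` of the point set. -/
def tpts (S : HSeq d m) : Set ℝ :=
  {r | ∃ (i : Fin m) (j : ℤ), r = (S.p i).1 + S.l * j}

/-- The period is minimal: the same set of points cannot be produced with a smaller period. -/
def IsMinimal (S : HSeq d m) : Prop :=
  ∀ (m' : ℕ) (T : HSeq d m'), T.pts = S.pts → S.l ≤ T.l

/-- The time distance list `DL`, indexed by `ZMod m`. -/
noncomputable def DL (S : HSeq d m) : ZMod m → ℝ := fun i =>
  letI : NeZero m := ⟨S.m_pos.ne'⟩
  if h : i.val + 1 < m then (S.p ⟨i.val + 1, h⟩).1 - (S.p ⟨i.val, i.val_lt⟩).1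
  else (S.p ⟨0, S.m_pos⟩).1 + S.l - (S.p ⟨i.val, i.val_lt⟩).1

/-- The time distance list of the multiple `(n/m)S` with `m ∣ n`: the `(n/m)`-fold
concatenation of `DL S`. -/
noncomputable def DLc (S : HSeq d m) (n : ℕ) : ZMod n → ℝ :=
  fun i => S.DL ((i.val : ZMod m))

/-- The value projection of the motif of the multiple `(n/m)S` with `m ∣ n`,
indexed by `ZMod n`. -/
def vproj (S : HSeq d m) (n : ℕ) : ZMod n → EuclideanSpace ℝ (Fin d) :=
  fun i => (S.p ⟨i.val % m, Nat.mod_lt _ S.m_pos⟩).2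

/-- The oriented elastic metric for high-dimensional periodic sequences:
`Elm^o(S,Q) = min_{s ∈ ZMod n} max {d_t(s), d_v(s)}` with `n = lcm(m₁,m₂)`, where
`d_t(s) = max_j |DL(S')_j - DL(Q')_{j+s}|` and `d_v(s)` is the max over rows
`i ∈ {1,…,n-1}` and columns `j ∈ ZMod n` of `|d_{ij}(S') - d_{i,j+s}(Q')|`
for the cyclic distance matrices of the value projections of the multiples
`S' = (n/m₁)S`, `Q' = (n/m₂)Q`. -/
noncomputable def Elmo {m₁ m₂ : ℕ} (S : HSeq d m₁) (Q : HSeq d m₂) : ℝ :=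
  letI : NeZero (Nat.lcm m₁ m₂) := ⟨(Nat.lcm_pos S.m_pos Q.m_pos).ne'⟩
  Finset.univ.inf' (Finset.univ_nonempty_iff.mpr ⟨0⟩)
    fun s : ZMod (Nat.lcm m₁ m₂) =>
      max
        (Finset.univ.sup' (Finset.univ_nonempty_iff.mpr ⟨0⟩)
          fun j : ZMod (Nat.lcm m₁ m₂) =>
            |S.DLc (Nat.lcm m₁ m₂) j - Q.DLc (Nat.lcm m₁ m₂) (j + s)|)
        ((((Finset.Icc 1 (Nat.lcm m₁ m₂ - 1) ×ˢ
            (Finset.univ : Finset (ZMod (Nat.lcm m₁ m₂)))).sup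
          fun x : ℕ × ZMod (Nat.lcm m₁ m₂) =>
            Real.nnabs
              (‖S.vproj (Nat.lcm m₁ m₂) x.2 -
                  S.vproj (Nat.lcm m₁ m₂) ((x.1 : ZMod (Nat.lcm m₁ m₂)) + x.2)‖ -
                ‖Q.vproj (Nat.lcm m₁ m₂) (x.2 + s) -
                  Q.vproj (Nat.lcm m₁ m₂) ((x.1 : ZMod (Nat.lcm m₁ m₂)) + x.2 + s)‖)) : NNReal) : ℝ)

end HSeq

/-!
Replacing a sequence by a multiple pulls its time list and motif back along the surjection
`ZMod N → ZMod m`, which changes no supremum, so `Elm^o` may be computed over the shifts in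
`ZMod N` for any common multiple `N` of the motif sizes. Take `N` common to `S`, `Q` and `T`.
Both cost components are sup-distances between a function and a shifted copy of another, so
the cost of the shift `s + t` from `S` to `T` is at most the cost of `s` from `S` to `Q` plus
that of `t` from `Q` to `T`; choosing `s` and `t` optimal gives the inequality.
-/

open Finset

namespace Finset

variable {ι κ α : Type*} [Fintype ι] [Nonempty ι]

theorem sup'_univ_comp_of_surjective [SemilatticeSup α] [Fintype κ] [Nonempty κ] {π : ι → κ}
    (hπ : Function.Surjective π) (f : κ → α) :
    univ.sup' univ_nonempty (f ∘ π) = univ.sup' univ_nonempty f :=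
  le_antisymm (sup'_le _ _ fun i _ => le_sup' f (mem_univ (π i)))
    (sup'_le _ _ fun k _ => by
      obtain ⟨i, rfl⟩ := hπ k
      exact le_sup' (f ∘ π) (mem_univ i))

theorem inf'_univ_comp_of_surjective [SemilatticeInf α] [Fintype κ] [Nonempty κ] {π : ι → κ}
    (hπ : Function.Surjective π) (f : κ → α) :
    univ.inf' univ_nonempty (f ∘ π) = univ.inf' univ_nonempty f :=
  sup'_univ_comp_of_surjective (α := αᵒᵈ) hπ f

theorem inf'_univ_le_add_of_le_add [Add ι] [LinearOrder α] [Add α] {f g h : ι → α}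
    (hfg : ∀ s t, h (s + t) ≤ f s + g t) :
    univ.inf' univ_nonempty h ≤ univ.inf' univ_nonempty f + univ.inf' univ_nonempty g := by
  obtain ⟨s, -, hs⟩ := exists_mem_eq_inf' univ_nonempty f
  obtain ⟨t, -, ht⟩ := exists_mem_eq_inf' univ_nonempty g
  rw [hs, ht]
  exact (inf'_le h (mem_univ (s + t))).trans (hfg s t)

end Finset

section ShiftDist

variable {G H E : Type*} [SeminormedAddCommGroup E]

/-- The entry `d_{ij}` of the cyclic distance matrix of a motif `u`, at `x = (i, j)`. -/
def cycDist [Add G] (u : G → E) : G × G → ℝ := fun x => ‖u x.2 - u (x.1 + x.2)‖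

theorem cycDist_comp [Add G] [Add H] {F : Type*} [FunLike F G H] [AddHomClass F G H] (π : F)
    (u : H → E) : cycDist (u ∘ π) = cycDist u ∘ Prod.map π π := by
  funext x
  simp only [cycDist, Function.comp_apply, Prod.map, map_add]

variable [Fintype G] [Nonempty G] [Fintype H] [Nonempty H]

noncomputable def shiftDist [Add G] (f g : G → ℝ) (s : G) : ℝ :=
  univ.sup' univ_nonempty fun x => |f x - g (x + s)|

theorem shiftDist_add_le [AddSemigroup G] (f g h : G → ℝ) (s t : G) :
    shiftDist f h (s + t) ≤ shiftDist f g s + shiftDist g h t := by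
  refine sup'_le _ _ fun x _ => ?_
  calc |f x - h (x + (s + t))| ≤ |f x - g (x + s)| + |g (x + s) - h (x + s + t)| := by
        rw [← add_assoc]
        exact abs_sub_le _ _ _
    _ ≤ shiftDist f g s + shiftDist g h t :=
        add_le_add (le_sup' (fun x => |f x - g (x + s)|) (mem_univ x))
          (le_sup' (fun y => |g y - h (y + t)|) (mem_univ (x + s)))

theorem shiftDist_comp [Add G] [Add H] {π : G → H} (hπ : Function.Surjective π)
    (hadd : ∀ x y, π (x + y) = π x + π y) (f g : H → ℝ) (s : G) :
    shiftDist (f ∘ π) (g ∘ π) s = shiftDist f g (π s) := by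
  simp only [shiftDist, Function.comp_apply, hadd]
  exact sup'_univ_comp_of_surjective hπ fun y => |f y - g (y + π s)|

/-- `max {d_t(s), d_v(s)}`; the shift by `(0, s)` moves only the column index `j`. -/
noncomputable def elasticCost [AddMonoid G] (τ τ' : G → ℝ) (ν ν' : G → E) (s : G) : ℝ :=
  max (shiftDist τ τ' s) (shiftDist (cycDist ν) (cycDist ν') (0, s))

theorem elasticCost_add_le [AddMonoid G] (τ₁ τ₂ τ₃ : G → ℝ) (ν₁ ν₂ ν₃ : G → E) (s t : G) :
    elasticCost τ₁ τ₃ ν₁ ν₃ (s + t) ≤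
      elasticCost τ₁ τ₂ ν₁ ν₂ s + elasticCost τ₂ τ₃ ν₂ ν₃ t := by
  refine max_le ?_ ?_
  · exact (shiftDist_add_le τ₁ τ₂ τ₃ s t).trans
      (add_le_add (le_max_left _ _) (le_max_left _ _))
  · have h := shiftDist_add_le (cycDist ν₁) (cycDist ν₂) (cycDist ν₃) (0, s) (0, t)
    rw [Prod.mk_add_mk, zero_add] at h
    exact h.trans (add_le_add (le_max_right _ _) (le_max_right _ _))

theorem elasticCost_comp [AddMonoid G] [AddMonoid H] {F : Type*} [FunLike F G H]
    [AddMonoidHomClass F G H] (π : F) (hπ : Function.Surjective π) (τ τ' : H → ℝ)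
    (ν ν' : H → E) (s : G) :
    elasticCost (τ ∘ π) (τ' ∘ π) (ν ∘ π) (ν' ∘ π) s = elasticCost τ τ' ν ν' (π s) := by
  have hπ₂ : Function.Surjective (Prod.map π π) := hπ.prodMap hπ
  have hadd₂ : ∀ x y : G × G, Prod.map π π (x + y) = Prod.map π π x + Prod.map π π y :=
    fun x y => Prod.ext (map_add π _ _) (map_add π _ _)
  rw [elasticCost, elasticCost, cycDist_comp, cycDist_comp, shiftDist_comp hπ (map_add π),
    shiftDist_comp hπ₂ hadd₂, Prod.map_apply, map_zero]

end ShiftDist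

theorem coe_sup_Icc_nnabs_eq_sup' {n : ℕ} [NeZero n] (F : ZMod n × ZMod n → ℝ)
    (hF : ∀ j, F (0, j) = 0) :
    (((Icc 1 (n - 1) ×ˢ univ).sup fun x : ℕ × ZMod n => Real.nnabs (F ((x.1 : ZMod n), x.2)) :
      NNReal) : ℝ) = univ.sup' univ_nonempty fun y => |F y| := by
  set R := univ.sup' univ_nonempty fun y => |F y|
  have hR : 0 ≤ R := (abs_nonneg _).trans (le_sup' (fun y => |F y|) (mem_univ (0, 0)))
  refine le_antisymm ?_ (sup'_le _ _ fun ⟨a, j⟩ _ => ?_)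
  · rw [← Real.coe_toNNReal R hR, NNReal.coe_le_coe]
    refine Finset.sup_le fun x _ => ?_
    rw [← NNReal.coe_le_coe, Real.coe_nnabs, Real.coe_toNNReal R hR]
    exact le_sup' (fun y => |F y|) (mem_univ _)
  · by_cases ha : a = 0
    · rw [ha, hF, abs_zero]
      exact NNReal.coe_nonneg _
    · have hmem : (a.val, j) ∈ Icc 1 (n - 1) ×ˢ (univ : Finset (ZMod n)) :=
        mem_product.2 ⟨mem_Icc.2 ⟨Nat.one_le_iff_ne_zero.2 ((ZMod.val_ne_zero a).2 ha),
          Nat.le_sub_one_of_lt (ZMod.val_lt a)⟩, mem_univ j⟩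
      have h := Finset.le_sup
        (f := fun x : ℕ × ZMod n => Real.nnabs (F ((x.1 : ZMod n), x.2))) hmem
      rw [← NNReal.coe_le_coe, Real.coe_nnabs] at h
      simpa only [ZMod.natCast_zmod_val] using h

namespace HSeq

variable {d m : ℕ}

theorem val_castHom {n N : ℕ} [NeZero N] (hn : n ∣ N) (j : ZMod N) :
    (ZMod.castHom hn (ZMod n) j).val = j.val % n := by
  rw [ZMod.castHom_apply, ZMod.cast_eq_val, ZMod.val_natCast]

theorem DLc_comp_castHom (S : HSeq d m) {n N : ℕ} [NeZero n] [NeZero N] (hm : m ∣ n)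
    (hn : n ∣ N) : S.DLc n ∘ ZMod.castHom hn (ZMod n) = S.DLc N := by
  funext j
  simp only [DLc, Function.comp_apply, val_castHom]
  rw [(ZMod.natCast_eq_natCast_iff' _ _ m).2 (Nat.mod_mod_of_dvd _ hm)]

theorem vproj_comp_castHom (S : HSeq d m) {n N : ℕ} [NeZero N] (hm : m ∣ n) (hn : n ∣ N) :
    S.vproj n ∘ ZMod.castHom hn (ZMod n) = S.vproj N := by
  funext j
  simp only [vproj, Function.comp_apply, val_castHom, Nat.mod_mod_of_dvd _ hm]

theorem Elmo_eq_inf'_lcm {m₁ m₂ : ℕ} [NeZero (Nat.lcm m₁ m₂)] (S : HSeq d m₁)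
    (Q : HSeq d m₂) :
    Elmo S Q = univ.inf' univ_nonempty fun s : ZMod (Nat.lcm m₁ m₂) =>
      elasticCost (S.DLc _) (Q.DLc _) (S.vproj _) (Q.vproj _) s := by
  refine inf'_congr _ rfl fun s _ => congrArg _ ?_
  rw [shiftDist, ← coe_sup_Icc_nnabs_eq_sup']
  · simp only [cycDist, Prod.mk_add_mk, add_zero, add_assoc]
  · intro j
    simp only [cycDist, Prod.mk_add_mk, zero_add, sub_self, norm_zero]

theorem Elmo_eq_inf'_of_dvd {m₁ m₂ N : ℕ} [NeZero N] (S : HSeq d m₁) (Q : HSeq d m₂)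
    (h₁ : m₁ ∣ N) (h₂ : m₂ ∣ N) :
    Elmo S Q = univ.inf' univ_nonempty fun s : ZMod N =>
      elasticCost (S.DLc N) (Q.DLc N) (S.vproj N) (Q.vproj N) s := by
  have : NeZero (Nat.lcm m₁ m₂) := ⟨(Nat.lcm_pos S.m_pos Q.m_pos).ne'⟩
  have hL : Nat.lcm m₁ m₂ ∣ N := Nat.lcm_dvd h₁ h₂
  set π := ZMod.castHom hL (ZMod (Nat.lcm m₁ m₂))
  have hπ : Function.Surjective π := ZMod.ringHom_surjective π
  rw [← S.DLc_comp_castHom (Nat.dvd_lcm_left m₁ m₂) hL,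
    ← Q.DLc_comp_castHom (Nat.dvd_lcm_right m₁ m₂) hL,
    ← S.vproj_comp_castHom (Nat.dvd_lcm_left m₁ m₂) hL,
    ← Q.vproj_comp_castHom (Nat.dvd_lcm_right m₁ m₂) hL, Elmo_eq_inf'_lcm,
    ← inf'_univ_comp_of_surjective hπ]
  exact inf'_congr _ rfl fun s _ => (elasticCost_comp π hπ _ _ _ _ s).symm

end HSeq

/-- the oriented elastic metric on high-dimensional periodic sequences
satisfies the triangle inequality. -/
theorem HElmo_triangle {d m₁ m₂ m₃ : ℕ}
    (S : HSeq d m₁) (Q : HSeq d m₂) (T : HSeq d m₃) :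
    HSeq.Elmo S T ≤ HSeq.Elmo S Q + HSeq.Elmo Q T := by
  set N := Nat.lcm (Nat.lcm m₁ m₂) m₃
  have : NeZero N := ⟨(Nat.lcm_pos (Nat.lcm_pos S.m_pos Q.m_pos) T.m_pos).ne'⟩
  have h₁ : m₁ ∣ N := (Nat.dvd_lcm_left m₁ m₂).trans (Nat.dvd_lcm_left _ m₃)
  have h₂ : m₂ ∣ N := (Nat.dvd_lcm_right m₁ m₂).trans (Nat.dvd_lcm_left _ m₃)
  have h₃ : m₃ ∣ N := Nat.dvd_lcm_right _ m₃
  rw [S.Elmo_eq_inf'_of_dvd T h₁ h₃, S.Elmo_eq_inf'_of_dvd Q h₁ h₂,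
    Q.Elmo_eq_inf'_of_dvd T h₂ h₃]
  exact inf'_univ_le_add_of_le_add (elasticCost_add_le _ _ _ _ _ _)
end

section
/- Let S, Q ⊆ ℝ × ℝ^d be high-dimensional periodic sequences and let ε ≥ 0. Suppose there is a bijection h : S → Q with ‖x − h(x)‖ ≤ ε for all x ∈ S (Euclidean norm on ℝ × ℝ^d), and suppose 2ε is strictly smaller than every distance between two distinct points of the time projection t(S) and every distance between two distinct points of t(Q). Then Elm^o(S,Q) ≤ 2ε. In particular Elm^o(S,Q) ≤ 2·d_B(S,Q) whenever 2·d_B(S,Q) is smaller than the minimum distance between points of t(S) and of t(Q), where d_B is the bottleneck distance. -/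
/-!
Enumerate the points of each sequence by `ℤ` in increasing time. Since `h` moves times by at
most `ε` while consecutive times of `S` are more than `2ε` apart, `h` preserves the time order;
being a bijection, it is then a translation `k ↦ k + s` of indices. The shift `s`, read in
`ZMod (lcm m₁ m₂)`, witnesses `Elm^o(S,Q) ≤ 2ε`: matched time gaps and matched value distances
differ by at most `2ε`, by the triangle inequality at both endpoints.
-/

theorem Int.eq_add_apply_zero_of_strictMono_of_surjective {g : ℤ → ℤ} (hg : StrictMono g)
    (hs : Function.Surjective g) (k : ℤ) : g k = k + g 0 := by
  have hsucc : ∀ k, g (k + 1) = g k + 1 := fun k => by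
    simpa [Order.succ_eq_add_one] using (hg.orderIsoOfSurjective g hs).map_succ k
  induction k using Int.induction_on with
  | zero => simp
  | succ k ih => rw [hsucc, ih]; ring
  | pred k ih =>
    have := hsucc (-(k : ℤ) - 1)
    rw [sub_add_cancel] at this
    linarith

theorem strictMono_of_abs_sub_le {ε : ℝ} {f g : ℤ → ℝ} {σ : ℤ → ℤ} (hg : Monotone g)
    (hf : ∀ k, 2 * ε < f (k + 1) - f k) (hσ : ∀ k, |f k - g (σ k)| ≤ ε) : StrictMono σ := by
  refine strictMono_int_of_lt_succ fun k => lt_of_not_ge fun hle => ?_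
  have := hg hle
  have h₀ := abs_le.mp (hσ k)
  have h₁ := abs_le.mp (hσ (k + 1))
  linarith [hf k]

theorem abs_le_and_abs_le_of_sqrt_le {a b ε : ℝ} (h : √(a ^ 2 + b ^ 2) ≤ ε) :
    |a| ≤ ε ∧ |b| ≤ ε :=
  ⟨(Real.abs_le_sqrt (by nlinarith)).trans h, (Real.abs_le_sqrt (by nlinarith)).trans h⟩

namespace HSeq

variable {d m : ℕ}

theorem neZero (S : HSeq d m) : NeZero m := ⟨S.m_pos.ne'⟩

/- The points of `S`, enumerated by `ℤ` in increasing time: the `k`-th point is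
`p (k mod m) + (k div m) • l • e₁`. -/
def idx (S : HSeq d m) (k : ℤ) : Fin m :=
  haveI := S.neZero
  ⟨(k : ZMod m).val, ZMod.val_lt _⟩

noncomputable def time (S : HSeq d m) (k : ℤ) : ℝ :=
  (S.p (S.idx k)).1 + S.l * (k / m : ℤ)

def value (S : HSeq d m) (k : ℤ) : EuclideanSpace ℝ (Fin d) :=
  (S.p (S.idx k)).2

theorem idx_natCast_add_mul (S : HSeq d m) (i : Fin m) (j : ℤ) : S.idx (i + m * j) = i := by
  have := S.neZero
  ext
  simp [idx, ZMod.val_natCast_of_lt i.isLt]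

theorem time_natCast_add_mul (S : HSeq d m) (i : Fin m) (j : ℤ) :
    S.time (i + m * j) = (S.p i).1 + S.l * j := by
  have hm : (m : ℤ) ≠ 0 := by exact_mod_cast S.m_pos.ne'
  rw [time, idx_natCast_add_mul, Int.add_mul_ediv_left _ _ hm,
    Int.ediv_eq_zero_of_lt (by positivity) (by exact_mod_cast i.isLt), zero_add]

theorem value_natCast_add_mul (S : HSeq d m) (i : Fin m) (j : ℤ) :
    S.value (i + m * j) = (S.p i).2 := by
  rw [value, idx_natCast_add_mul]

theorem eq_idx_add_mul (S : HSeq d m) (k : ℤ) : k = S.idx k + m * (k / m) := by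
  have := S.neZero
  simp only [idx, ZMod.val_intCast, Int.emod_add_mul_ediv]

theorem time_add_mul (S : HSeq d m) (k j : ℤ) : S.time (k + m * j) = S.time k + S.l * j := by
  conv_lhs => rw [S.eq_idx_add_mul k, add_assoc, ← mul_add, time_natCast_add_mul]
  conv_rhs => rw [S.eq_idx_add_mul k, time_natCast_add_mul]
  push_cast
  ring

theorem mem_pts_iff (S : HSeq d m) {x : ℝ × EuclideanSpace ℝ (Fin d)} :
    x ∈ S.pts ↔ ∃ k, x = (S.time k, S.value k) := by
  constructor
  · rintro ⟨i, j, rfl⟩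
    exact ⟨i + m * j, by rw [time_natCast_add_mul, value_natCast_add_mul]⟩
  · rintro ⟨k, rfl⟩
    exact ⟨S.idx k, k / m, by
      rw [← time_natCast_add_mul, ← value_natCast_add_mul, ← S.eq_idx_add_mul k]⟩

theorem time_mem_tpts (S : HSeq d m) (k : ℤ) : S.time k ∈ S.tpts := by
  obtain ⟨i, j, hij⟩ := S.mem_pts_iff.mpr ⟨k, rfl⟩
  exact ⟨i, j, congrArg Prod.fst hij⟩

theorem DL_natCast (S : HSeq d m) (i : Fin m) :
    S.DL (i : ℕ) = S.time (i + 1) - S.time i := by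
  have hi : ((i : ℕ) : ZMod m).val = i := ZMod.val_natCast_of_lt i.isLt
  have hti : S.time i = (S.p i).1 := by simpa using S.time_natCast_add_mul i 0
  unfold DL
  simp only [hi, hti]
  split_ifs with hlt
  · simpa using (S.time_natCast_add_mul ⟨i + 1, hlt⟩ 0).symm
  · have hsucc : (i : ℤ) + 1 = (⟨0, S.m_pos⟩ : Fin m) + m * 1 := by push_cast; omega
    rw [hsucc, time_natCast_add_mul]
    push_cast
    ring

theorem DL_intCast (S : HSeq d m) (k : ℤ) :
    S.DL k = S.time (k + 1) - S.time k := by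
  have hk : (k : ZMod m) = ((S.idx k : ℕ) : ZMod m) := by
    conv_lhs => rw [S.eq_idx_add_mul k]
    simp
  rw [hk, DL_natCast]
  conv_rhs => rw [S.eq_idx_add_mul k, add_right_comm, time_add_mul, time_add_mul]
  ring

theorem DL_pos (S : HSeq d m) (i : ZMod m) : 0 < S.DL i := by
  have := S.neZero
  unfold DL
  split_ifs
  · exact sub_pos.mpr (S.t_strict (Fin.mk_lt_mk.mpr (Nat.lt_succ_self _)))
  · linarith [S.t0_nonneg, S.t_lt ⟨i.val, i.val_lt⟩]

theorem strictMono_time (S : HSeq d m) : StrictMono S.time :=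
  strictMono_int_of_lt_succ fun k => sub_pos.mp (S.DL_intCast k ▸ S.DL_pos k)

theorem DLc_intCast (S : HSeq d m) {n : ℕ} [NeZero n] (hmn : m ∣ n) (k : ℤ) :
    S.DLc n k = S.time (k + 1) - S.time k := by
  rw [DLc, ZMod.natCast_val, ZMod.cast_intCast hmn, DL_intCast]

theorem vproj_intCast (S : HSeq d m) {n : ℕ} [NeZero n] (hmn : m ∣ n) (k : ℤ) :
    S.vproj n k = S.value k := by
  have := S.neZero
  have h : ((k : ZMod n).val % m : ℕ) = (S.idx k : ℕ) := by
    rw [idx, ← ZMod.val_natCast, ZMod.natCast_val, ZMod.cast_intCast hmn]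
  simp only [vproj, value, h]


variable {m₁ m₂ : ℕ}

theorem lt_time_add_one_sub {S : HSeq d m₁} {c : ℝ}
    (hsep : ∀ a ∈ S.tpts, ∀ b ∈ S.tpts, a ≠ b → c < |a - b|) (k : ℤ) :
    c < S.time (k + 1) - S.time k := by
  have hlt := S.strictMono_time (lt_add_one k)
  simpa [abs_of_pos (sub_pos.mpr hlt)] using
    hsep _ (S.time_mem_tpts (k + 1)) _ (S.time_mem_tpts k) hlt.ne'

theorem exists_shift_of_bijOn {S : HSeq d m₁} {Q : HSeq d m₂} {ε : ℝ}
    {h : ℝ × EuclideanSpace ℝ (Fin d) → ℝ × EuclideanSpace ℝ (Fin d)}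
    (hbij : Set.BijOn h S.pts Q.pts)
    (hmove : ∀ x ∈ S.pts, √((x.1 - (h x).1) ^ 2 + ‖x.2 - (h x).2‖ ^ 2) ≤ ε)
    (hsep : ∀ k, 2 * ε < S.time (k + 1) - S.time k) :
    ∃ s : ℤ, ∀ k, |S.time k - Q.time (k + s)| ≤ ε ∧ ‖S.value k - Q.value (k + s)‖ ≤ ε := by
  have hmaps k : ∃ k', h (S.time k, S.value k) = (Q.time k', Q.value k') :=
    Q.mem_pts_iff.mp (hbij.mapsTo (S.mem_pts_iff.mpr ⟨k, rfl⟩))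
  choose σ hσ using hmaps
  have hclose k : |S.time k - Q.time (σ k)| ≤ ε ∧ ‖S.value k - Q.value (σ k)‖ ≤ ε := by
    have := hmove _ (S.mem_pts_iff.mpr ⟨k, rfl⟩)
    rw [hσ] at this
    simpa using abs_le_and_abs_le_of_sqrt_le this
  have hmono : StrictMono σ :=
    strictMono_of_abs_sub_le Q.strictMono_time.monotone hsep fun k => (hclose k).1
  have hsurj : Function.Surjective σ := fun k' => by
    obtain ⟨x, hx, hxk'⟩ := hbij.surjOn (Q.mem_pts_iff.mpr ⟨k', rfl⟩)
    obtain ⟨k, rfl⟩ := S.mem_pts_iff.mp hx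
    exact ⟨k, Q.strictMono_time.injective (congrArg Prod.fst ((hσ k).symm.trans hxk'))⟩
  refine ⟨σ 0, fun k => ?_⟩
  rw [← Int.eq_add_apply_zero_of_strictMono_of_surjective hmono hsurj]
  exact hclose k

theorem Elmo_le {S : HSeq d m₁} {Q : HSeq d m₂} {c : ℝ} (hc : 0 ≤ c)
    (s : ZMod (Nat.lcm m₁ m₂))
    (hDL : ∀ j, |S.DLc (Nat.lcm m₁ m₂) j - Q.DLc (Nat.lcm m₁ m₂) (j + s)| ≤ c)
    (hv : ∀ (i : ℕ) (j : ZMod (Nat.lcm m₁ m₂)),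
      |‖S.vproj _ j - S.vproj _ ((i : ZMod (Nat.lcm m₁ m₂)) + j)‖ -
        ‖Q.vproj _ (j + s) - Q.vproj _ ((i : ZMod (Nat.lcm m₁ m₂)) + j + s)‖| ≤ c) :
    Elmo S Q ≤ c := by
  have := NeZero.of_pos (Nat.lcm_pos S.m_pos Q.m_pos)
  unfold Elmo
  refine (Finset.inf'_le _ (Finset.mem_univ s)).trans (max_le ?_ ?_)
  · exact Finset.sup'_le _ _ fun j _ => hDL j
  · rw [← Real.coe_toNNReal c hc, NNReal.coe_le_coe]
    refine Finset.sup_le fun x _ => ?_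
    rw [← NNReal.coe_le_coe, Real.coe_nnabs, Real.coe_toNNReal c hc]
    exact hv x.1 x.2

theorem Elmo_le_two_mul_of_shift {S : HSeq d m₁} {Q : HSeq d m₂} {ε : ℝ} (hε : 0 ≤ ε) (s : ℤ)
    (hclose : ∀ k, |S.time k - Q.time (k + s)| ≤ ε ∧ ‖S.value k - Q.value (k + s)‖ ≤ ε) :
    Elmo S Q ≤ 2 * ε := by
  have := NeZero.of_pos (Nat.lcm_pos S.m_pos Q.m_pos)
  have hS := Nat.dvd_lcm_left m₁ m₂
  have hQ := Nat.dvd_lcm_right m₁ m₂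
  refine Elmo_le (by positivity) s (fun j => ?_) (fun i j => ?_)
  · obtain ⟨k, rfl⟩ := ZMod.intCast_surjective j
    rw [← Int.cast_add, S.DLc_intCast hS, Q.DLc_intCast hQ]
    have h₀ := abs_le.mp (hclose k).1
    have h₁ := abs_le.mp (hclose (k + 1)).1
    rw [add_right_comm] at h₁
    exact abs_le.mpr ⟨by linarith, by linarith⟩
  · obtain ⟨k, rfl⟩ := ZMod.intCast_surjective j
    rw [show (i : ZMod (Nat.lcm m₁ m₂)) + (k : ZMod _) = (((i : ℤ) + k : ℤ) : ZMod _) by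
      push_cast; rfl]
    simp only [← Int.cast_add, S.vproj_intCast hS, Q.vproj_intCast hQ]
    rw [← dist_eq_norm, ← dist_eq_norm, ← Real.dist_eq]
    refine (dist_dist_dist_le _ _ _ _).trans ?_
    rw [dist_eq_norm, dist_eq_norm]
    linarith [(hclose k).2, (hclose (i + k)).2]

end HSeq

theorem HElmo_continuity_general {d m₁ m₂ : ℕ} (S : HSeq d m₁) (Q : HSeq d m₂)
    (ε : ℝ) (hε : 0 ≤ ε)
    (h : ℝ × EuclideanSpace ℝ (Fin d) → ℝ × EuclideanSpace ℝ (Fin d))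
    (hbij : Set.BijOn h S.pts Q.pts)
    (hmove : ∀ x ∈ S.pts, Real.sqrt ((x.1 - (h x).1) ^ 2 + ‖x.2 - (h x).2‖ ^ 2) ≤ ε)
    (hsepS : ∀ a ∈ S.tpts, ∀ b ∈ S.tpts, a ≠ b → 2 * ε < |a - b|) :
    HSeq.Elmo S Q ≤ 2 * ε := by
  obtain ⟨s, hs⟩ :=
    HSeq.exists_shift_of_bijOn hbij hmove (HSeq.lt_time_add_one_sub hsepS)
  exact HSeq.Elmo_le_two_mul_of_shift hε s hs

/-- continuity of the high-dimensional elastic metric: if some bijection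
`h` between the points of `S` and of `Q` moves every point by at most `ε` in the Euclidean
norm of `ℝ × ℝ^d`, and `2ε` is smaller than every distance between distinct points of the
time projections `t(S)` and `t(Q)`, then `Elm^o(S,Q) ≤ 2ε`.  In particular
`Elm^o(S,Q) ≤ 2 d_B(S,Q)` under the corresponding assumption on the bottleneck
distance `d_B`. -/
theorem HElmo_continuity {d m₁ m₂ : ℕ} (S : HSeq d m₁) (Q : HSeq d m₂)
    (ε : ℝ) (hε : 0 ≤ ε)
    (h : ℝ × EuclideanSpace ℝ (Fin d) → ℝ × EuclideanSpace ℝ (Fin d))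
    (hbij : Set.BijOn h S.pts Q.pts)
    (hmove : ∀ x ∈ S.pts, Real.sqrt ((x.1 - (h x).1) ^ 2 + ‖x.2 - (h x).2‖ ^ 2) ≤ ε)
    (hsepS : ∀ a ∈ S.tpts, ∀ b ∈ S.tpts, a ≠ b → 2 * ε < |a - b|)
    (hsepQ : ∀ a ∈ Q.tpts, ∀ b ∈ Q.tpts, a ≠ b → 2 * ε < |a - b|) :
    HSeq.Elmo S Q ≤ 2 * ε :=
  HElmo_continuity_general S Q ε hε h hbij hmove hsepS
end
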